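/- Let K be a field, V a K-vector space, λ ∈ K with λ ≠ 1, and let c : V ⊗ V → V ⊗ V be a K-linear map with (c + id)(c − λ·id) = 0. If a subspace L ⊆ V satisfies c(image of L ⊗ V) ⊆ image of V ⊗ L and c(image of V ⊗ L) ⊆ image of L ⊗ V (inside V ⊗ V), then c maps the image of L ⊗ V into the image of L ⊗ L in V ⊗ V. -/

import Mathlib

open TensorProduct

noncomputable section

variable {K : Type*} [Field K] {V : Type*} [AddCommGroup V] [Module K V]

/-- The endomorphism `c ⊗ id_V` of `V ⊗ (V ⊗ V)` (transported along associativity). -/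
def opC1 (c : V ⊗[K] V →ₗ[K] V ⊗[K] V) :
    V ⊗[K] (V ⊗[K] V) →ₗ[K] V ⊗[K] (V ⊗[K] V) :=
  (TensorProduct.assoc K V V V).toLinearMap ∘ₗ
    LinearMap.rTensor V c ∘ₗ (TensorProduct.assoc K V V V).symm.toLinearMap

/-- The endomorphism `id_V ⊗ c` of `V ⊗ (V ⊗ V)`. -/
def opC2 (c : V ⊗[K] V →ₗ[K] V ⊗[K] V) :
    V ⊗[K] (V ⊗[K] V) →ₗ[K] V ⊗[K] (V ⊗[K] V) :=
  LinearMap.lTensor V c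

/-- The map `b ⊗ id_V : V ⊗ (V ⊗ V) → V ⊗ V`. -/
def opB1 (b : V ⊗[K] V →ₗ[K] V) :
    V ⊗[K] (V ⊗[K] V) →ₗ[K] V ⊗[K] V :=
  LinearMap.rTensor V b ∘ₗ (TensorProduct.assoc K V V V).symm.toLinearMap

/-- The map `id_V ⊗ b : V ⊗ (V ⊗ V) → V ⊗ V`. -/
def opB2 (b : V ⊗[K] V →ₗ[K] V) :
    V ⊗[K] (V ⊗[K] V) →ₗ[K] V ⊗[K] V :=
  LinearMap.lTensor V b

/-- The braid equation `c₁ ∘ c₂ ∘ c₁ = c₂ ∘ c₁ ∘ c₂`. -/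
def BraidEq (c : V ⊗[K] V →ₗ[K] V ⊗[K] V) : Prop :=
  opC1 c ∘ₗ opC2 c ∘ₗ opC1 c = opC2 c ∘ₗ opC1 c ∘ₗ opC2 c

/-- `c` is of Hecke type of mark `lam`: `(c + id) ∘ (c - lam • id) = 0`. -/
def IsHecke (lam : K) (c : V ⊗[K] V →ₗ[K] V ⊗[K] V) : Prop :=
  (c + LinearMap.id) ∘ₗ (c - lam • LinearMap.id) = 0

/-- `b` is a `c`-bracket: `c ∘ b₁ = b₂ ∘ c₁ ∘ c₂` and `c ∘ b₂ = b₁ ∘ c₂ ∘ c₁`. -/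
def IsBracket (c : V ⊗[K] V →ₗ[K] V ⊗[K] V) (b : V ⊗[K] V →ₗ[K] V) : Prop :=
  c ∘ₗ opB1 b = opB2 b ∘ₗ opC1 c ∘ₗ opC2 c ∧
  c ∘ₗ opB2 b = opB1 b ∘ₗ opC2 c ∘ₗ opC1 c

/-- The linear map `V ⊗ V → T(V)`, `v ⊗ w ↦ ι v * ι w`. -/
def tensMul : V ⊗[K] V →ₗ[K] TensorAlgebra K V :=
  LinearMap.mul' K (TensorAlgebra K V) ∘ₗ
    TensorProduct.map (TensorAlgebra.ι K) (TensorAlgebra.ι K)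

/-- The relation on `T(V)` whose associated ring quotient is
`U(V,c,b) = T(V)/(c(z) - lam•z - b(z) : z ∈ V ⊗ V)`. -/
def envRel (lam : K) (c : V ⊗[K] V →ₗ[K] V ⊗[K] V) (b : V ⊗[K] V →ₗ[K] V) :
    TensorAlgebra K V → TensorAlgebra K V → Prop :=
  fun x y => ∃ z : V ⊗[K] V,
    x = tensMul (c z) ∧ y = lam • tensMul z + TensorAlgebra.ι K (b z)

/-- The canonical map `ι_{c,b} : V → U(V,c,b)`. -/
def envIota (lam : K) (c : V ⊗[K] V →ₗ[K] V ⊗[K] V) (b : V ⊗[K] V →ₗ[K] V) :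
    V →ₗ[K] RingQuot (envRel lam c b) :=
  (RingQuot.mkAlgHom K (envRel lam c b)).toLinearMap ∘ₗ TensorAlgebra.ι K

/-- The q-integer `(n)_lam = 1 + lam + ⋯ + lam^(n-1)`. -/
def qInt (lam : K) (n : ℕ) : K := ∑ i ∈ Finset.range n, lam ^ i

/-- The q-factorial `(n)!_lam = (1)_lam (2)_lam ⋯ (n)_lam`. -/
def qFac (lam : K) (n : ℕ) : K := ∏ i ∈ Finset.range n, qInt lam (i + 1)


/-- The image of `L ⊗ V` in `V ⊗ V`: the span of the elements `x ⊗ v` with `x ∈ L`, `v ∈ V`. -/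
def imgLV (L : Submodule K V) : Submodule K (V ⊗[K] V) :=
  Submodule.span K {z | ∃ x ∈ L, ∃ v : V, z = x ⊗ₜ[K] v}

/-- The image of `V ⊗ L` in `V ⊗ V`: the span of the elements `v ⊗ x` with `v ∈ V`, `x ∈ L`. -/
def imgVL (L : Submodule K V) : Submodule K (V ⊗[K] V) :=
  Submodule.span K {z | ∃ v : V, ∃ x ∈ L, z = v ⊗ₜ[K] x}

/-- The image of `L ⊗ L` in `V ⊗ V`: the span of the elements `x ⊗ y` with `x, y ∈ L`. -/
def imgLL (L : Submodule K V) : Submodule K (V ⊗[K] V) :=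
  Submodule.span K {z | ∃ x ∈ L, ∃ y ∈ L, z = x ⊗ₜ[K] y}

/-- The Hecke relation reads `c (c z) = (lam - 1) • c z + lam • z`, and `lam - 1` is invertible. -/
theorem IsHecke.apply_mem_of_apply_apply_mem {lam : K} {c : V ⊗[K] V →ₗ[K] V ⊗[K] V}
    (hHecke : IsHecke lam c) (hlam1 : lam ≠ 1) {W : Submodule K (V ⊗[K] V)}
    {z : V ⊗[K] V} (hz : z ∈ W) (hccz : c (c z) ∈ W) : c z ∈ W := by
  have hquad : c (c z) = (lam - 1) • c z + lam • z := by
    have h := LinearMap.congr_fun hHecke z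
    simp only [LinearMap.comp_apply, LinearMap.add_apply, LinearMap.sub_apply,
      LinearMap.smul_apply, LinearMap.id_apply, LinearMap.zero_apply, map_sub, map_smul] at h
    linear_combination (norm := module) h
  have hsmul : (lam - 1) • c z ∈ W := by
    simpa [hquad] using W.sub_mem hccz (W.smul_mem lam hz)
  exact (W.smul_mem_iff (sub_ne_zero.mpr hlam1)).mp hsmul

section Retraction

variable {L : Submodule K V} {p : V →ₗ[K] V}

theorem imgLV_le_eqLocus_rTensor (hp : ∀ x ∈ L, p x = x) :
    imgLV L ≤ LinearMap.eqLocus (LinearMap.rTensor V p) LinearMap.id := by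
  refine Submodule.span_le.mpr ?_
  rintro _ ⟨x, hx, v, rfl⟩
  simp [hp x hx]

theorem imgVL_le_eqLocus_lTensor (hp : ∀ x ∈ L, p x = x) :
    imgVL L ≤ LinearMap.eqLocus (LinearMap.lTensor V p) LinearMap.id := by
  refine Submodule.span_le.mpr ?_
  rintro _ ⟨v, x, hx, rfl⟩
  simp [hp x hx]

theorem range_map_le_imgLL (hp : ∀ v, p v ∈ L) :
    LinearMap.range (TensorProduct.map p p) ≤ imgLL L := by
  rw [TensorProduct.range_map_eq_span_tmul]
  refine Submodule.span_mono ?_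
  rintro _ ⟨v, w, rfl⟩
  exact ⟨p v, hp v, p w, hp w, rfl⟩

end Retraction

/-- A retraction `p` of `V` onto `L` fixes `z ∈ imgLV L ⊓ imgVL L` in each factor, so
`z = (p ⊗ p) z`, which lies in `imgLL L`. -/
theorem imgLV_inf_imgVL_le_imgLL (L : Submodule K V) : imgLV L ⊓ imgVL L ≤ imgLL L := by
  obtain ⟨r, hr⟩ := LinearMap.exists_leftInverse_of_injective L.subtype L.ker_subtype
  set p : V →ₗ[K] V := L.subtype ∘ₗ r
  have hpL : ∀ x ∈ L, p x = x := fun x hx =>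
    congrArg Subtype.val (LinearMap.congr_fun hr ⟨x, hx⟩)
  rintro z ⟨hLV, hVL⟩
  have hfix : TensorProduct.map p p z = z := by
    rw [← LinearMap.lTensor_comp_rTensor, LinearMap.comp_apply,
      imgLV_le_eqLocus_rTensor hpL hLV, LinearMap.id_apply,
      imgVL_le_eqLocus_lTensor hpL hVL, LinearMap.id_apply]
  rw [← hfix]
  exact range_map_le_imgLL (fun v => (r v).2) (LinearMap.mem_range_self _ z)

theorem categorical_maps_into_imgLL
    (lam : K) (hlam1 : lam ≠ 1)
    (c : V ⊗[K] V →ₗ[K] V ⊗[K] V) (hHecke : IsHecke lam c)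
    (L : Submodule K V)
    (hcat1 : ∀ z ∈ imgLV L, c z ∈ imgVL L)
    (hcat2 : ∀ z ∈ imgVL L, c z ∈ imgLV L) :
    ∀ z ∈ imgLV L, c z ∈ imgLL L := by
  intro z hz
  have hVL : c z ∈ imgVL L := hcat1 z hz
  have hLV : c z ∈ imgLV L := hHecke.apply_mem_of_apply_apply_mem hlam1 hz (hcat2 _ hVL)
  exact imgLV_inf_imgVL_le_imgLL L ⟨hLV, hVL⟩

end
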